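/- The q-logarithm satisfies the q-difference equation S_q(x/q) - S_q(x) = 1 - (x;q)_∞ for all x ∈ ℂ, where 0 < q < 1. -/

import Mathlib

noncomputable def qPoch (q x : ℂ) (k : ℕ) : ℂ := ∏ j ∈ Finset.range k, (1 - x * q ^ j)

noncomputable def Sq (q : ℝ) (x : ℂ) : ℂ :=
  -∑' k : ℕ, ((q : ℂ) ^ (k + 1) / (1 - (q : ℂ) ^ (k + 1))) * qPoch q x (k + 1)

/-!
Write `a_k = q^(k+1) / (1 - q^(k+1))`. Since `(x/q; q)_(k+1) = (1 - x/q) (x; q)_k`, the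
`k`-th terms of `S_q(x)` and `S_q(x/q)` differ by `a_k (x; q)_k x (1/q - q^k) = x q^k (x; q)_k`,
which is `(x; q)_k - (x; q)_(k+1)`. So `S_q(x/q) - S_q(x)` telescopes to
`(x; q)_0 - lim (x; q)_n = 1 - (x; q)_∞`.
-/

open Filter Topology

theorem tsum_sub_succ_eq_sub_of_tendsto {G : Type*} [AddCommGroup G] [TopologicalSpace G]
    [IsTopologicalAddGroup G] [T2Space G] {f : ℕ → G} {l : G}
    (hs : Summable fun n ↦ f n - f (n + 1)) (hf : Tendsto f atTop (𝓝 l)) :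
    ∑' n, (f n - f (n + 1)) = f 0 - l := by
  refine tendsto_nhds_unique hs.hasSum.tendsto_sum_nat ?_
  simp_rw [Finset.sum_range_sub']
  exact tendsto_const_nhds.sub hf

section qPoch

variable {q : ℂ}

@[simp]
theorem qPoch_zero (x : ℂ) : qPoch q x 0 = 1 := Finset.prod_range_zero _

theorem qPoch_succ (x : ℂ) (k : ℕ) : qPoch q x (k + 1) = qPoch q x k * (1 - x * q ^ k) :=
  Finset.prod_range_succ _ _

theorem qPoch_div_succ (hq : q ≠ 0) (x : ℂ) (k : ℕ) :
    qPoch q (x / q) (k + 1) = qPoch q x k * (1 - x / q) := by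
  rw [qPoch, Finset.prod_range_succ', pow_zero, mul_one, qPoch]
  congr 1
  refine Finset.prod_congr rfl fun j _ ↦ ?_
  rw [pow_succ]
  field_simp

theorem Sq_term_sub_Sq_term_div (hq : q ≠ 0) (x : ℂ) {k : ℕ} (hk : 1 - q ^ (k + 1) ≠ 0) :
    q ^ (k + 1) / (1 - q ^ (k + 1)) * qPoch q x (k + 1)
      - q ^ (k + 1) / (1 - q ^ (k + 1)) * qPoch q (x / q) (k + 1)
      = qPoch q x k - qPoch q x (k + 1) := by
  rw [qPoch_div_succ hq, qPoch_succ]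
  field_simp
  ring

theorem multipliable_one_sub_mul_pow (hq : ‖q‖ < 1) (x : ℂ) :
    Multipliable fun j : ℕ ↦ 1 - x * q ^ j := by
  simpa only [sub_eq_add_neg] using Complex.multipliable_one_add_of_summable
    ((summable_geometric_of_norm_lt_one hq).mul_left x).neg

theorem tendsto_qPoch (hq : ‖q‖ < 1) (x : ℂ) :
    Tendsto (qPoch q x) atTop (𝓝 (∏' j : ℕ, (1 - x * q ^ j))) :=
  (multipliable_one_sub_mul_pow hq x).tendsto_prod_tprod_nat

theorem summable_Sq_term (hq : ‖q‖ < 1) (x : ℂ) :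
    Summable fun k : ℕ ↦ q ^ (k + 1) / (1 - q ^ (k + 1)) * qPoch q x (k + 1) := by
  have hpow : Tendsto (fun k : ℕ ↦ q ^ (k + 1)) atTop (𝓝 0) :=
    (tendsto_pow_atTop_nhds_zero_of_norm_lt_one hq).comp (tendsto_add_atTop_nat 1)
  have hquot : Tendsto (fun k : ℕ ↦ qPoch q x (k + 1) / (1 - q ^ (k + 1))) cofinite
      (𝓝 ((∏' j : ℕ, (1 - x * q ^ j)) / (1 - 0))) := by
    rw [Nat.cofinite_eq_atTop]
    exact ((tendsto_qPoch hq x).comp (tendsto_add_atTop_nat 1)).div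
      (tendsto_const_nhds.sub hpow) (by simp)
  have hnorm : Summable fun k : ℕ ↦ ‖q ^ (k + 1)‖ := by
    simpa only [norm_pow] using
      (summable_nat_add_iff 1).mpr (summable_geometric_of_lt_one (norm_nonneg q) hq)
  exact (hnorm.mul_tendsto_const hquot).congr fun k ↦ by ring

end qPoch

theorem qlog_qdifference_equation (q : ℝ) (hq0 : 0 < q) (hq1 : q < 1) (x : ℂ) :
    Sq q (x / (q : ℂ)) - Sq q x = 1 - ∏' j : ℕ, (1 - x * (q : ℂ) ^ j) := by
  have hq : ‖(q : ℂ)‖ < 1 := by rwa [Complex.norm_real, Real.norm_of_nonneg hq0.le]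
  have hq_ne : (q : ℂ) ≠ 0 := Complex.ofReal_ne_zero.mpr hq0.ne'
  have hk (k : ℕ) : 1 - (q : ℂ) ^ (k + 1) ≠ 0 := by
    refine sub_ne_zero.mpr fun h ↦ (pow_lt_one₀ (norm_nonneg _) hq k.succ_ne_zero).ne ?_
    rw [← norm_pow, ← h, norm_one]
  have hx := summable_Sq_term hq x
  have hxq := summable_Sq_term hq (x / q)
  have hterm := funext fun k ↦ Sq_term_sub_Sq_term_div hq_ne x (hk k)
  have htel : Summable fun k ↦ qPoch q x k - qPoch q x (k + 1) := hterm ▸ hx.sub hxq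
  rw [Sq, Sq, neg_sub_neg, ← hx.tsum_sub hxq, hterm,
    tsum_sub_succ_eq_sub_of_tendsto htel (tendsto_qPoch hq x), qPoch_zero]
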